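/- Let L ≥ 1 and N ≥ 1 be natural numbers with L·N·ε = 1, set H := Nε, and for each l ∈ {0,…,L−1} let T_l := [lH,(l+1)H] be the coarse elements, S_l ⊆ {0,…,N−1} a defect set of cardinality k_l, and θ := max_l k_l/N. Let A : [0,1] → ℝ be the global sample coefficient, defined by A(x) := A_ε(x)+B_ε(x) if x ∈ [ε(lN+j+q₀), ε(lN+j+q₁)] for some l and some j ∈ S_l, and A(x) := A_ε(x) otherwise. For each l define A_harm,l := H/∫_{T_l}(1/A(x))dx and A^μ_harm,l := (1−k_l)·H/(N·Ā) + k_l·H/(N·Ā+Ā_def). Then for all continuous functions v, w : [0,1] → ℝ that are affine on each T_l with slopes v'_l and w'_l, the bilinear forms 𝔟(v,w) := Σ_l A_harm,l·v'_l·w'_l·H and 𝔟̃(v,w) := Σ_l A^μ_harm,l·v'_l·w'_l·H satisfy |𝔟(v,w) − 𝔟̃(v,w)| ≤ (β/α)·((β−α)/α)²·|Q|²·((ε/H)·θ + 2θ²)·(∫_0^1 A|v'|²)^{1/2}·(∫_0^1 A|w'|²)^{1/2}. -/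

import Mathlib

/-!
Cut the coarse element `T_l` into its `N` periodicity cells `[εm, ε(m+1)]`. By periodicity each
cell contributes `Ā` to `∫_{T_l} 1/A`, plus `Ā_def` if it carries a defect, so
`∫_{T_l} 1/A = P_k := N Ā + k_l Ā_def` exactly and `A_harm,l = H / P_k`. The offline coefficient
`A^μ_harm,l` is the interpolation of `k ↦ H / P_k` that is affine in `k` and exact at `k = 0, 1`;
its error is `H k (k - 1) Ā_def² / (P₀ P₁ P_k)`. Every `P` is `≥ H/β` and
`|Ā_def| ≤ ε |Q| (1/α - 1/β)`, which bounds the coefficient error on each element by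
`β (β - α)² |Q|² θ² / α²`. Cauchy–Schwarz over the elements and `α ≤ A` turn this into the
energy-norm bound with the factor `θ²`, which is at most `(ε/H) θ + 2 θ²`.
-/

open MeasureTheory intervalIntegral Function Set

lemma Measurable.intervalIntegrable_of_bounds {f : ℝ → ℝ} (hf : Measurable f) {c C : ℝ}
    (h : ∀ x, c ≤ f x ∧ f x ≤ C) (a b : ℝ) : IntervalIntegrable f volume a b :=
  (intervalIntegrable_const (c := |c| + |C|)).mono_fun' hf.aestronglyMeasurable
    (ae_of_all _ fun x => by
      change |f x| ≤ |c| + |C|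
      rw [abs_le]
      constructor <;> linarith [h x, neg_abs_le c, le_abs_self C, abs_nonneg c, abs_nonneg C])

lemma one_div_bounds {α β t : ℝ} (hα : 0 < α) (h : α ≤ t ∧ t ≤ β) :
    1 / β ≤ 1 / t ∧ 1 / t ≤ 1 / α :=
  ⟨one_div_le_one_div_of_le (hα.trans_le h.1) h.2, one_div_le_one_div_of_le hα h.1⟩

lemma sub_mul_le_intervalIntegral {f : ℝ → ℝ} {a b c : ℝ} (hab : a ≤ b)
    (hf : IntervalIntegrable f volume a b) (h : ∀ x, c ≤ f x) :
    (b - a) * c ≤ ∫ x in a..b, f x := by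
  simpa using integral_mono_on hab intervalIntegrable_const hf fun x _ => h x

lemma Function.Periodic.intervalIntegral_add_nat_mul {f : ℝ → ℝ} {T : ℝ} (hf : Periodic f T)
    (n : ℕ) (a b : ℝ) : ∫ x in a + n * T..b + n * T, f x = ∫ x in a..b, f x := by
  rw [← integral_comp_add_right]
  exact integral_congr fun x _ => hf.nat_mul n x

lemma IntervalIntegrable.indicator {g : ℝ → ℝ} {s : Set ℝ} {u v : ℝ}
    (hg : IntervalIntegrable g volume u v) (hs : MeasurableSet s) :
    IntervalIntegrable (s.indicator g) volume u v :=
  ⟨hg.1.indicator hs, hg.2.indicator hs⟩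

lemma abs_one_div_sub_one_div_le {α β u v : ℝ} (hα : 0 < α) (hu : α ≤ u ∧ u ≤ β)
    (hv : α ≤ v ∧ v ≤ β) : |1 / u - 1 / v| ≤ 1 / α - 1 / β := by
  have hu' := one_div_bounds hα hu
  have hv' := one_div_bounds hα hv
  rw [abs_le]
  constructor <;> linarith

lemma Nat.eq_and_eq_of_mul_add_eq {N l l' j j' : ℕ} (hj : j < N) (hj' : j' < N)
    (h : l' * N + j' = l * N + j) : l' = l ∧ j' = j := by
  have hN : 0 < N := by omega
  obtain ⟨hl, hjN⟩ := (Nat.div_mod_unique (a := l * N + j) (d := l) hN).2 ⟨by ring, hj⟩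
  obtain ⟨hl', hjN'⟩ :=
    (Nat.div_mod_unique (a := l * N + j) (d := l') hN).2 ⟨by rw [← h]; ring, hj'⟩
  exact ⟨hl'.symm.trans hl, hjN'.symm.trans hjN⟩

lemma harmonic_sub_interp_eq {P D H k : ℝ} (h₁ : P ≠ 0) (h₂ : P + D ≠ 0) (h₃ : P + k * D ≠ 0) :
    H / (P + k * D) - ((1 - k) * H / P + k * H / (P + D))
      = H * (k * (k - 1)) * D ^ 2 / (P * (P + D) * (P + k * D)) := by
  field_simp
  ring

lemma abs_harmonic_sub_interp_le {P D H c : ℝ} (k : ℕ) (hc : 0 < c) (h₁ : c ≤ P)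
    (h₂ : c ≤ P + D) (h₃ : c ≤ P + k * D) (hH : 0 ≤ H) :
    |H / (P + k * D) - ((1 - k) * H / P + k * H / (P + D))|
      ≤ H * (k * (k - 1)) * D ^ 2 / c ^ 3 := by
  have hk : (0 : ℝ) ≤ k * (k - 1) := by
    rcases Nat.eq_zero_or_pos k with rfl | hk
    · simp
    · have : (1 : ℝ) ≤ k := by exact_mod_cast hk
      nlinarith
  have hnum : 0 ≤ H * (k * (k - 1)) * D ^ 2 := by positivity
  have hden : c ^ 3 ≤ P * (P + D) * (P + k * D) := by
    rw [pow_three, ← mul_assoc]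
    exact mul_le_mul (mul_le_mul h₁ h₂ hc.le (hc.le.trans h₁)) h₃ hc.le
      (mul_nonneg (hc.le.trans h₁) (hc.le.trans h₂))
  rw [harmonic_sub_interp_eq (hc.trans_le h₁).ne' (hc.trans_le h₂).ne' (hc.trans_le h₃).ne',
    abs_of_nonneg (div_nonneg hnum ((pow_pos hc 3).le.trans hden))]
  exact div_le_div_of_nonneg_left hnum (pow_pos hc 3) hden

lemma abs_harmonic_sub_interp_le_of_bounds {α β ε Q θ H P D : ℝ} {N k : ℕ} (hα : 0 < α)
    (hαβ : α ≤ β) (hε : 0 < ε) (hN : 0 < N) (hH : H = N * ε) (h₁ : H / β ≤ P)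
    (h₂ : H / β ≤ P + D) (h₃ : H / β ≤ P + k * D) (hD : |D| ≤ ε * Q * (1 / α - 1 / β))
    (hk : k ≤ θ * N) :
    |H / (P + k * D) - ((1 - k) * H / P + k * H / (P + D))|
      ≤ β * (β - α) ^ 2 * Q ^ 2 / α ^ 2 * θ ^ 2 := by
  have hβ : 0 < β := hα.trans_le hαβ
  have hHpos : 0 < H := by rw [hH]; positivity
  have hkk : (k : ℝ) * (k - 1) ≤ (θ * N) ^ 2 := by nlinarith [(Nat.cast_nonneg k : (0 : ℝ) ≤ k)]
  have hD2 : D ^ 2 ≤ (ε * Q * (1 / α - 1 / β)) ^ 2 := by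
    rw [← sq_abs D]
    exact pow_le_pow_left₀ (abs_nonneg D) hD 2
  calc _ ≤ H * (k * (k - 1)) * D ^ 2 / (H / β) ^ 3 :=
        abs_harmonic_sub_interp_le k (by positivity) h₁ h₂ h₃ hHpos.le
    _ ≤ H * (θ * N) ^ 2 * (ε * Q * (1 / α - 1 / β)) ^ 2 / (H / β) ^ 3 := by
        gcongr
    _ = β * (β - α) ^ 2 * Q ^ 2 / α ^ 2 * θ ^ 2 := by
        rw [hH]
        field_simp

lemma abs_sum_mul_le_mul_sqrt_mul_sqrt {ι : Type*} (s : Finset ι) (c x y : ι → ℝ) {h C : ℝ}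
    (hh : 0 ≤ h) (hC : 0 ≤ C) (hc : ∀ i ∈ s, |c i| ≤ C) :
    |∑ i ∈ s, c i * x i * y i * h|
      ≤ C * (√(∑ i ∈ s, h * x i ^ 2) * √(∑ i ∈ s, h * y i ^ 2)) := by
  have hsqrt : ∀ i, √(h * x i ^ 2) * √(h * y i ^ 2) = |x i| * |y i| * h := fun i => by
    rw [← Real.sqrt_mul (by positivity), Real.sqrt_eq_iff_mul_self_eq (by positivity)
      (by positivity), ← sq_abs (x i), ← sq_abs (y i)]
    ring
  calc |∑ i ∈ s, c i * x i * y i * h|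
      ≤ ∑ i ∈ s, |c i * x i * y i * h| := Finset.abs_sum_le_sum_abs _ _
    _ ≤ ∑ i ∈ s, C * (√(h * x i ^ 2) * √(h * y i ^ 2)) := by
        refine Finset.sum_le_sum fun i hi => ?_
        rw [hsqrt, abs_mul, abs_mul, abs_mul, abs_of_nonneg hh, mul_assoc, mul_assoc,
          ← mul_assoc |x i|]
        exact mul_le_mul_of_nonneg_right (hc i hi) (by positivity)
    _ ≤ C * (√(∑ i ∈ s, h * x i ^ 2) * √(∑ i ∈ s, h * y i ^ 2)) := by
        rw [← Finset.mul_sum]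
        exact mul_le_mul_of_nonneg_left
          (Real.sum_sqrt_mul_sqrt_le s (fun i => by positivity) fun i => by positivity) hC

lemma mul_sum_mul_sq_le_sum_integral {A : ℝ → ℝ} {α H : ℝ} (hH : 0 ≤ H) (hA : ∀ x, α ≤ A x)
    (hAi : ∀ u v, IntervalIntegrable A volume u v) (s : Finset ℕ) (u : ℕ → ℝ) :
    α * ∑ l ∈ s, H * u l ^ 2 ≤ ∑ l ∈ s, ∫ x in l * H..(l + 1) * H, A x * u l ^ 2 := by
  rw [Finset.mul_sum]
  refine Finset.sum_le_sum fun l _ => ?_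
  have h := sub_mul_le_intervalIntegral (c := α * u l ^ 2) (by nlinarith)
    ((hAi (l * H) ((l + 1) * H)).mul_const (u l ^ 2))
    fun x => mul_le_mul_of_nonneg_right (hA x) (sq_nonneg _)
  exact le_of_eq_of_le (by ring) h

lemma mul_sqrt_mul_sqrt_le {α K P Q X Y : ℝ} (hα : 0 < α) (hK : 0 ≤ K) (hX : α * P ≤ X)
    (hY : α * Q ≤ Y) : K * (√P * √Q) ≤ K / α * √X * √Y := by
  have hP : √α * √P ≤ √X := by rw [← Real.sqrt_mul hα.le]; exact Real.sqrt_le_sqrt hX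
  have hQ : √α * √Q ≤ √Y := by rw [← Real.sqrt_mul hα.le]; exact Real.sqrt_le_sqrt hY
  have hαα : √α * √α = α := Real.mul_self_sqrt hα.le
  calc K * (√P * √Q) = K / α * ((√α * √P) * (√α * √Q)) := by
        rw [mul_mul_mul_comm, hαα]
        field_simp
    _ ≤ K / α * (√X * √Y) := by gcongr
    _ = K / α * √X * √Y := by ring

def defectInterval (ε q₀ q₁ : ℝ) (m : ℕ) : Set ℝ := Icc (ε * (m + q₀)) (ε * (m + q₁))

section Cells

variable {ε q₀ q₁ : ℝ}

lemma measurableSet_defectInterval {m : ℕ} : MeasurableSet (defectInterval ε q₀ q₁ m) :=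
  measurableSet_Icc

lemma eq_of_mem_Ioo_of_mem_defectInterval (hε : 0 < ε) (hq₀ : 0 ≤ q₀) (hq₁ : q₁ ≤ 1)
    {m m' : ℕ} {x : ℝ} (hx : x ∈ Ioo (ε * m) (ε * (m + 1)))
    (hx' : x ∈ defectInterval ε q₀ q₁ m') : m' = m := by
  obtain ⟨hx₁, hx₂⟩ := hx
  obtain ⟨hx'₁, hx'₂⟩ := hx'
  have h₁ : (m' : ℝ) < m + 1 := lt_of_mul_lt_mul_left (by nlinarith) hε.le
  have h₂ : (m : ℝ) < m' + 1 := lt_of_mul_lt_mul_left (by nlinarith) hε.le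
  have : m' < m + 1 := by exact_mod_cast h₁
  have : m < m' + 1 := by exact_mod_cast h₂
  omega

lemma integral_indicator_defectInterval (hε : 0 < ε) (hq₀ : 0 ≤ q₀) (hq₀₁ : q₀ ≤ q₁)
    (hq₁ : q₁ ≤ 1) {g : ℝ → ℝ} (hg : Periodic g ε) (m : ℕ) :
    ∫ x in ε * m..ε * (m + 1), (defectInterval ε q₀ q₁ m).indicator g x
      = ∫ x in ε * q₀..ε * q₁, g x := by
  have hsub : defectInterval ε q₀ q₁ m ⊆ Icc (ε * m) (ε * (m + 1)) :=
    Icc_subset_Icc (by nlinarith) (by nlinarith)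
  have hae : (Ioc (ε * m) (ε * (m + 1)) ∩ defectInterval ε q₀ q₁ m : Set ℝ)
      =ᵐ[volume] defectInterval ε q₀ q₁ m := by
    have h := (Ioc_ae_eq_Icc (a := ε * m) (b := ε * (m + 1)) (μ := volume)).inter
      (ae_eq_refl (defectInterval ε q₀ q₁ m))
    rwa [inter_eq_right.mpr hsub] at h
  rw [integral_of_le (by nlinarith), setIntegral_indicator measurableSet_defectInterval,
    setIntegral_congr_set hae, defectInterval, integral_Icc_eq_integral_Ioc,
    ← integral_of_le (by nlinarith), ← hg.intervalIntegral_add_nat_mul m (ε * q₀) (ε * q₁)]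
  congr 1 <;> ring

variable {f g a : ℝ → ℝ}

lemma integral_cell_eq (hε : 0 < ε) (hq₀ : 0 ≤ q₀) (hq₀₁ : q₀ ≤ q₁) (hq₁ : q₁ ≤ 1)
    (hf : Periodic f ε) (hg : Periodic g ε)
    (hfi : ∀ u v, IntervalIntegrable f volume u v) (hgi : ∀ u v, IntervalIntegrable g volume u v)
    (m : ℕ) (p : Prop) [Decidable p]
    (ha : EqOn a (fun x => f x + if p then (defectInterval ε q₀ q₁ m).indicator g x else 0)
      (Ioo (ε * m) (ε * (m + 1)))) :
    ∫ x in ε * m..ε * (m + 1), a x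
      = (∫ x in 0..ε, f x) + if p then ∫ x in ε * q₀..ε * q₁, g x else 0 := by
  have hle : ε * m ≤ ε * (m + 1) := by nlinarith
  have hf_cell : ∫ x in ε * m..ε * (m + 1), f x = ∫ x in 0..ε, f x := by
    simpa [mul_add] using hf.intervalIntegral_add_eq (ε * m) 0
  rw [intervalIntegral.integral_congr_ae (g := fun x =>
    f x + if p then (defectInterval ε q₀ q₁ m).indicator g x else 0) ?_]
  · split_ifs
    · rw [integral_add (hfi _ _) ((hgi _ _).indicator measurableSet_defectInterval), hf_cell,
        integral_indicator_defectInterval hε hq₀ hq₀₁ hq₁ hg]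
    · simp [hf_cell]
  · filter_upwards [volume.ae_ne (ε * (m + 1))] with x hne hx
    rw [uIoc_of_le hle] at hx
    exact ha ⟨hx.1, hx.2.lt_of_ne hne⟩

lemma integral_cells_eq (hε : 0 < ε) (hq₀ : 0 ≤ q₀) (hq₀₁ : q₀ ≤ q₁) (hq₁ : q₁ ≤ 1)
    (hf : Periodic f ε) (hg : Periodic g ε)
    (hfi : ∀ u v, IntervalIntegrable f volume u v) (hgi : ∀ u v, IntervalIntegrable g volume u v)
    (hai : ∀ u v, IntervalIntegrable a volume u v) (n K : ℕ) (s : Finset ℕ)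
    (hs : s ⊆ Finset.range K)
    (ha : ∀ j < K, EqOn a
      (fun x => f x + if j ∈ s then (defectInterval ε q₀ q₁ (n + j)).indicator g x else 0)
      (Ioo (ε * (n + j : ℕ)) (ε * ((n + j : ℕ) + 1)))) :
    ∫ x in ε * n..ε * (n + K), a x
      = K * (∫ x in 0..ε, f x) + s.card * ∫ x in ε * q₀..ε * q₁, g x := by
  have hsum := sum_integral_adjacent_intervals (μ := volume) (f := a)
    (a := fun j : ℕ => ε * ((n + j : ℕ) : ℝ)) (n := K) fun j _ => hai _ _
  simp only [add_zero, Nat.cast_add, Nat.cast_one] at hsum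
  have hcell : ∀ j ∈ Finset.range K, ∫ x in ε * (n + j)..ε * (n + (j + 1)), a x
      = (∫ x in 0..ε, f x) + if j ∈ s then ∫ x in ε * q₀..ε * q₁, g x else 0 := by
    intro j hj
    have h := integral_cell_eq hε hq₀ hq₀₁ hq₁ hf hg hfi hgi (n + j) (j ∈ s)
      (ha j (Finset.mem_range.1 hj))
    push_cast at h
    rwa [← add_assoc]
  rw [← hsum, Finset.sum_congr rfl hcell, Finset.sum_add_distrib, Finset.sum_const,
    Finset.card_range, nsmul_eq_mul, Finset.sum_ite_mem, Finset.inter_eq_right.mpr hs,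
    Finset.sum_const, nsmul_eq_mul]

end Cells

def IsDefect (ε q₀ q₁ : ℝ) (L N : ℕ) (S : ℕ → Finset ℕ) (x : ℝ) : Prop :=
  ∃ l ∈ Finset.range L, ∃ j ∈ S l, x ∈ defectInterval ε q₀ q₁ (l * N + j)

section Sample

variable {ε q₀ q₁ : ℝ} {L N : ℕ} {S : ℕ → Finset ℕ}

lemma measurableSet_isDefect : MeasurableSet {x | IsDefect ε q₀ q₁ L N S x} := by
  have : {x | IsDefect ε q₀ q₁ L N S x}
      = ⋃ l ∈ Finset.range L, ⋃ j ∈ S l, defectInterval ε q₀ q₁ (l * N + j) := by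
    ext x
    simp [IsDefect]
  rw [this]
  exact Finset.measurableSet_biUnion _ fun l _ =>
    Finset.measurableSet_biUnion _ fun j _ => measurableSet_defectInterval

lemma measurable_of_isDefect {a b₀ b₁ : ℝ → ℝ} (hm₀ : Measurable b₀) (hm₁ : Measurable b₁)
    (hdef : ∀ x, IsDefect ε q₀ q₁ L N S x → a x = b₁ x)
    (hreg : ∀ x, ¬ IsDefect ε q₀ q₁ L N S x → a x = b₀ x) : Measurable a := by
  classical
  have : a = {x | IsDefect ε q₀ q₁ L N S x}.piecewise b₁ b₀ := by
    funext x
    by_cases h : IsDefect ε q₀ q₁ L N S x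
    · simp [h, hdef x h]
    · simp [h, hreg x h]
  rw [this]
  exact hm₁.piecewise measurableSet_isDefect hm₀

-- Only on the open cell: for `q₀ = 0` or `q₁ = 1` the defect intervals of the neighbouring
-- cells reach its endpoints.
lemma isDefect_iff_of_mem_Ioo (hε : 0 < ε) (hq₀ : 0 ≤ q₀) (hq₁ : q₁ ≤ 1)
    (hS : ∀ l, S l ⊆ Finset.range N) {l j : ℕ} (hl : l < L) (hj : j < N) {x : ℝ}
    (hx : x ∈ Ioo (ε * (l * N + j : ℕ)) (ε * ((l * N + j : ℕ) + 1))) :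
    IsDefect ε q₀ q₁ L N S x ↔ j ∈ S l ∧ x ∈ defectInterval ε q₀ q₁ (l * N + j) := by
  constructor
  · rintro ⟨l', -, j', hj', hx'⟩
    obtain ⟨rfl, rfl⟩ := Nat.eq_and_eq_of_mul_add_eq hj (Finset.mem_range.1 (hS l' hj'))
      (eq_of_mem_Ioo_of_mem_defectInterval hε hq₀ hq₁ hx hx')
    exact ⟨hj', hx'⟩
  · rintro ⟨hj', hx'⟩
    exact ⟨l, Finset.mem_range.2 hl, j, hj', hx'⟩

variable {a b₀ b₁ : ℝ → ℝ}

lemma integral_eq_of_isDefect (hε : 0 < ε) (hq₀ : 0 ≤ q₀) (hq₀₁ : q₀ ≤ q₁) (hq₁ : q₁ ≤ 1)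
    (hS : ∀ l, S l ⊆ Finset.range N) (hb₀ : Periodic b₀ ε) (hb₁ : Periodic b₁ ε)
    (hi₀ : ∀ u v, IntervalIntegrable b₀ volume u v)
    (hi₁ : ∀ u v, IntervalIntegrable b₁ volume u v)
    (hai : ∀ u v, IntervalIntegrable a volume u v)
    (hdef : ∀ x, IsDefect ε q₀ q₁ L N S x → a x = b₁ x)
    (hreg : ∀ x, ¬ IsDefect ε q₀ q₁ L N S x → a x = b₀ x) {l : ℕ} (hl : l < L) :
    ∫ x in ε * (l * N : ℕ)..ε * ((l * N : ℕ) + N), a x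
      = N * (∫ x in 0..ε, b₀ x) + (S l).card * ∫ x in ε * q₀..ε * q₁, (b₁ x - b₀ x) := by
  refine integral_cells_eq (g := fun x => b₁ x - b₀ x) hε hq₀ hq₀₁ hq₁ hb₀ (hb₁.sub hb₀) hi₀
    (fun u v => (hi₁ u v).sub (hi₀ u v)) hai (l * N) N (S l) (hS l) fun j hj x hx => ?_
  by_cases hx' : IsDefect ε q₀ q₁ L N S x
  · obtain ⟨hjS, hxI⟩ := (isDefect_iff_of_mem_Ioo hε hq₀ hq₁ hS hl hj hx).1 hx'
    simp [hdef x hx', hjS, hxI]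
  · have hax := hreg x hx'
    rw [isDefect_iff_of_mem_Ioo hε hq₀ hq₁ hS hl hj hx, not_and] at hx'
    by_cases hjS : j ∈ S l
    · simp [hax, hjS, hx' hjS]
    · simp [hax, hjS]

lemma mul_le_intervalIntegral_add (hε : 0 < ε) (hq₀ : 0 ≤ q₀) (hq₀₁ : q₀ ≤ q₁) (hq₁ : q₁ ≤ 1)
    (hb₀ : Periodic b₀ ε) (hb₁ : Periodic b₁ ε)
    (hi₀ : ∀ u v, IntervalIntegrable b₀ volume u v)
    (hi₁ : ∀ u v, IntervalIntegrable b₁ volume u v) {c : ℝ} (hc₀ : ∀ x, c ≤ b₀ x)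
    (hc₁ : ∀ x, c ≤ b₁ x) :
    ε * c ≤ (∫ x in 0..ε, b₀ x) + ∫ x in ε * q₀..ε * q₁, (b₁ x - b₀ x) := by
  have hcell := integral_cell_eq (g := fun x => b₁ x - b₀ x)
    (a := fun x => b₀ x + (defectInterval ε q₀ q₁ 0).indicator (fun x => b₁ x - b₀ x) x)
    hε hq₀ hq₀₁ hq₁ hb₀ (hb₁.sub hb₀) hi₀ (fun u v => (hi₁ u v).sub (hi₀ u v)) 0 True
    fun x _ => by simp
  simp only [CharP.cast_eq_zero, mul_zero, zero_add, mul_one, if_true] at hcell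
  rw [← hcell]
  simpa using sub_mul_le_intervalIntegral hε.le
    ((hi₀ 0 ε).add (((hi₁ 0 ε).sub (hi₀ 0 ε)).indicator measurableSet_defectInterval))
    fun x => by
      by_cases hx : x ∈ defectInterval ε q₀ q₁ 0
      · simp [indicator_of_mem hx, hc₁ x]
      · simp [indicator_of_notMem hx, hc₀ x]

end Sample

section Coefficients

variable {α β ε q₀ q₁ : ℝ} {L N : ℕ} {S : ℕ → Finset ℕ} {a₀ a₁ A : ℝ → ℝ}

lemma bounds_of_isDefect (h₀ : ∀ x, α ≤ a₀ x ∧ a₀ x ≤ β) (h₁ : ∀ x, α ≤ a₁ x ∧ a₁ x ≤ β)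
    (hdef : ∀ x, IsDefect ε q₀ q₁ L N S x → A x = a₁ x)
    (hreg : ∀ x, ¬ IsDefect ε q₀ q₁ L N S x → A x = a₀ x) (x : ℝ) : α ≤ A x ∧ A x ≤ β := by
  by_cases h : IsDefect ε q₀ q₁ L N S x
  · exact hdef x h ▸ h₁ x
  · exact hreg x h ▸ h₀ x

lemma integral_one_div_eq_of_isDefect (hα : 0 < α) (hε : 0 < ε) (hq₀ : 0 ≤ q₀)
    (hq₀₁ : q₀ ≤ q₁) (hq₁ : q₁ ≤ 1) (hS : ∀ l, S l ⊆ Finset.range N)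
    (hp₀ : Periodic a₀ ε) (hp₁ : Periodic a₁ ε) (hm₀ : Measurable a₀) (hm₁ : Measurable a₁)
    (h₀ : ∀ x, α ≤ a₀ x ∧ a₀ x ≤ β) (h₁ : ∀ x, α ≤ a₁ x ∧ a₁ x ≤ β)
    (hdef : ∀ x, IsDefect ε q₀ q₁ L N S x → A x = a₁ x)
    (hreg : ∀ x, ¬ IsDefect ε q₀ q₁ L N S x → A x = a₀ x) {l : ℕ} (hl : l < L) :
    ∫ x in ε * (l * N : ℕ)..ε * ((l * N : ℕ) + N), 1 / A x
      = N * (∫ x in 0..ε, 1 / a₀ x)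
        + (S l).card * ∫ x in ε * q₀..ε * q₁, (1 / a₁ x - 1 / a₀ x) := by
  have hmA : Measurable A := measurable_of_isDefect hm₀ hm₁ hdef hreg
  exact integral_eq_of_isDefect (a := fun x => 1 / A x) (b₀ := fun x => 1 / a₀ x)
    (b₁ := fun x => 1 / a₁ x) hε hq₀ hq₀₁ hq₁ hS (hp₀.comp fun t => 1 / t)
    (hp₁.comp fun t => 1 / t)
    ((measurable_const.div hm₀).intervalIntegrable_of_bounds fun x => one_div_bounds hα (h₀ x))
    ((measurable_const.div hm₁).intervalIntegrable_of_bounds fun x => one_div_bounds hα (h₁ x))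
    ((measurable_const.div hmA).intervalIntegrable_of_bounds fun x =>
      one_div_bounds hα (bounds_of_isDefect h₀ h₁ hdef hreg x))
    (fun x hx => by simp only [hdef x hx]) (fun x hx => by simp only [hreg x hx]) hl

lemma sub_div_le_intervalIntegral_one_div (hα : 0 < α) (hm : Measurable a₀)
    (h₀ : ∀ x, α ≤ a₀ x ∧ a₀ x ≤ β) {u v : ℝ} (huv : u ≤ v) :
    (v - u) / β ≤ ∫ x in u..v, 1 / a₀ x := by
  rw [← mul_one_div]
  exact sub_mul_le_intervalIntegral huv
    ((measurable_const.div hm).intervalIntegrable_of_bounds (fun x => one_div_bounds hα (h₀ x))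
      u v)
    fun x => (one_div_bounds hα (h₀ x)).1

lemma div_le_intervalIntegral_one_div_add (hα : 0 < α) (hε : 0 < ε) (hq₀ : 0 ≤ q₀)
    (hq₀₁ : q₀ ≤ q₁) (hq₁ : q₁ ≤ 1) (hp₀ : Periodic a₀ ε) (hp₁ : Periodic a₁ ε)
    (hm₀ : Measurable a₀) (hm₁ : Measurable a₁) (h₀ : ∀ x, α ≤ a₀ x ∧ a₀ x ≤ β)
    (h₁ : ∀ x, α ≤ a₁ x ∧ a₁ x ≤ β) :
    ε / β ≤ (∫ x in 0..ε, 1 / a₀ x) + ∫ x in ε * q₀..ε * q₁, (1 / a₁ x - 1 / a₀ x) := by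
  rw [← mul_one_div]
  exact mul_le_intervalIntegral_add (b₀ := fun x => 1 / a₀ x) (b₁ := fun x => 1 / a₁ x)
    hε hq₀ hq₀₁ hq₁ (hp₀.comp fun t => 1 / t) (hp₁.comp fun t => 1 / t)
    ((measurable_const.div hm₀).intervalIntegrable_of_bounds fun x => one_div_bounds hα (h₀ x))
    ((measurable_const.div hm₁).intervalIntegrable_of_bounds fun x => one_div_bounds hα (h₁ x))
    (fun x => (one_div_bounds hα (h₀ x)).1) fun x => (one_div_bounds hα (h₁ x)).1

lemma abs_intervalIntegral_one_div_sub_le (hα : 0 < α) (hε : 0 < ε) (hq₀₁ : q₀ ≤ q₁)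
    (h₀ : ∀ x, α ≤ a₀ x ∧ a₀ x ≤ β) (h₁ : ∀ x, α ≤ a₁ x ∧ a₁ x ≤ β) :
    |∫ x in ε * q₀..ε * q₁, (1 / a₁ x - 1 / a₀ x)| ≤ ε * (q₁ - q₀) * (1 / α - 1 / β) := by
  have h := norm_integral_le_of_norm_le_const (a := ε * q₀) (b := ε * q₁)
    (f := fun x => 1 / a₁ x - 1 / a₀ x) fun x _ => abs_one_div_sub_one_div_le hα (h₁ x) (h₀ x)
  rw [Real.norm_eq_abs, ← mul_sub, abs_of_nonneg (a := ε * (q₁ - q₀)) (by nlinarith)] at h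
  linarith

lemma abs_harmonic_sub_offline_le (hα : 0 < α) (hαβ : α ≤ β) (hε : 0 < ε) (hq₀ : 0 ≤ q₀)
    (hq₀₁ : q₀ ≤ q₁) (hq₁ : q₁ ≤ 1) (hN : 1 ≤ N) (hS : ∀ l, S l ⊆ Finset.range N)
    (hp₀ : Periodic a₀ ε) (hp₁ : Periodic a₁ ε) (hm₀ : Measurable a₀) (hm₁ : Measurable a₁)
    (h₀ : ∀ x, α ≤ a₀ x ∧ a₀ x ≤ β) (h₁ : ∀ x, α ≤ a₁ x ∧ a₁ x ≤ β)
    (hdef : ∀ x, IsDefect ε q₀ q₁ L N S x → A x = a₁ x)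
    (hreg : ∀ x, ¬ IsDefect ε q₀ q₁ L N S x → A x = a₀ x) {θ : ℝ} {l : ℕ} (hl : l < L)
    (hθ : (S l).card ≤ θ * N) :
    let H := N * ε
    let Abar := ∫ x in 0..ε, 1 / a₀ x
    let Adef := ∫ x in ε * q₀..ε * q₁, (1 / a₁ x - 1 / a₀ x)
    |H / (∫ x in l * H..(l + 1) * H, 1 / A x)
        - ((1 - (S l).card) * H / (N * Abar) + (S l).card * H / (N * Abar + Adef))|
      ≤ β * (β - α) ^ 2 * (q₁ - q₀) ^ 2 / α ^ 2 * θ ^ 2 := by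
  intro H Abar Adef
  have hH : H = N * ε := rfl
  have hT : ∫ x in l * H..(l + 1) * H, 1 / A x = N * Abar + (S l).card * Adef := by
    have e₀ : (l : ℝ) * H = ε * ((l * N : ℕ) : ℝ) := by rw [hH]; push_cast; ring
    have e₁ : ((l : ℝ) + 1) * H = ε * (((l * N : ℕ) : ℝ) + N) := by rw [hH]; push_cast; ring
    rw [e₀, e₁]
    exact integral_one_div_eq_of_isDefect hα hε hq₀ hq₀₁ hq₁ hS hp₀ hp₁ hm₀ hm₁ h₀ h₁ hdef
      hreg hl
  have hAbar : ε / β ≤ Abar := by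
    have h := sub_div_le_intervalIntegral_one_div hα hm₀ h₀ hε.le
    rwa [sub_zero] at h
  have hP : H / β ≤ N * Abar := by
    rw [hH, mul_div_assoc]
    exact mul_le_mul_of_nonneg_left hAbar (Nat.cast_nonneg N)
  have hPD : H / β ≤ N * Abar + Adef := by
    have h := div_le_intervalIntegral_one_div_add hα hε hq₀ hq₀₁ hq₁ hp₀ hp₁ hm₀ hm₁ h₀ h₁
    have hN' : (1 : ℝ) ≤ N := by exact_mod_cast hN
    rw [hH, mul_div_assoc]
    nlinarith
  have hPk : H / β ≤ N * Abar + (S l).card * Adef := by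
    have hHpos : 0 < H := by rw [hH]; positivity
    rw [← hT]
    simpa [← sub_mul] using sub_div_le_intervalIntegral_one_div hα
      (measurable_of_isDefect hm₀ hm₁ hdef hreg) (bounds_of_isDefect h₀ h₁ hdef hreg)
      (by nlinarith : (l : ℝ) * H ≤ (l + 1) * H)
  rw [hT]
  exact abs_harmonic_sub_interp_le_of_bounds hα hαβ hε hN hH hP hPD hPk
    (abs_intervalIntegral_one_div_sub_le hα hε hq₀₁ h₀ h₁) hθ

end Coefficients

theorem stmt_8_general (α β ε q₀ q₁ : ℝ) (Aper Bper : ℝ → ℝ)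
    (hα : 0 < α) (hαβ : α ≤ β) (hε : 0 < ε)
    (hAmeas : Measurable Aper) (hBmeas : Measurable Bper)
    (hAper : Function.Periodic Aper 1) (hBper : Function.Periodic Bper 1)
    (hAbd : ∀ y, α ≤ Aper y ∧ Aper y ≤ β)
    (hABbd : ∀ y, α ≤ Aper y + Bper y ∧ Aper y + Bper y ≤ β)
    (hq0 : 0 ≤ q₀) (hq01 : q₀ ≤ q₁) (hq1 : q₁ ≤ 1)
    (L N : ℕ) (hL : 1 ≤ L) (hN : 1 ≤ N)
    (S : ℕ → Finset ℕ) (hS : ∀ l, S l ⊆ Finset.range N)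
    (A : ℝ → ℝ)
    (hAdef : ∀ x, (∃ l ∈ Finset.range L, ∃ j ∈ S l,
        x ∈ Set.Icc (ε * (((l * N + j : ℕ) : ℝ) + q₀)) (ε * (((l * N + j : ℕ) : ℝ) + q₁)))
        → A x = Aper (x / ε) + Bper (x / ε))
    (hAout : ∀ x, ¬ (∃ l ∈ Finset.range L, ∃ j ∈ S l,
        x ∈ Set.Icc (ε * (((l * N + j : ℕ) : ℝ) + q₀)) (ε * (((l * N + j : ℕ) : ℝ) + q₁)))
        → A x = Aper (x / ε))
    (vs ws : ℕ → ℝ) :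
    let H : ℝ := (N : ℝ) * ε
    let θ : ℝ := (Finset.range L).sup'
        (Finset.nonempty_range_iff.mpr (Nat.one_le_iff_ne_zero.mp hL))
        (fun l => ((S l).card : ℝ) / (N : ℝ))
    let Abar : ℝ := ∫ x in (0 : ℝ)..ε, 1 / Aper (x / ε)
    let Adef : ℝ := ∫ x in (ε * q₀)..(ε * q₁),
        (1 / (Aper (x / ε) + Bper (x / ε)) - 1 / Aper (x / ε))
    |(∑ l ∈ Finset.range L,
          (H / (∫ x in ((l : ℝ) * H)..(((l : ℝ) + 1) * H), 1 / A x)) * vs l * ws l * H)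
      - (∑ l ∈ Finset.range L,
          ((1 - ((S l).card : ℝ)) * H / ((N : ℝ) * Abar)
            + ((S l).card : ℝ) * H / ((N : ℝ) * Abar + Adef)) * vs l * ws l * H)|
      ≤ (β / α) * ((β - α) / α) ^ 2 * (q₁ - q₀) ^ 2 * ((ε / H) * θ + 2 * θ ^ 2)
        * Real.sqrt (∑ l ∈ Finset.range L,
            ∫ x in ((l : ℝ) * H)..(((l : ℝ) + 1) * H), A x * (vs l) ^ 2)
        * Real.sqrt (∑ l ∈ Finset.range L,
            ∫ x in ((l : ℝ) * H)..(((l : ℝ) + 1) * H), A x * (ws l) ^ 2) := by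
  intro H θ Abar Adef
  have hHpos : 0 < H := by positivity
  have hp₀ : Periodic (fun x => Aper (x / ε)) ε := by simpa using hAper.div_const ε
  have hp₁ : Periodic (fun x => Aper (x / ε) + Bper (x / ε)) ε :=
    hp₀.add (by simpa using hBper.div_const ε)
  have hm₀ : Measurable fun x => Aper (x / ε) := hAmeas.comp (measurable_id.div_const ε)
  have hm₁ : Measurable fun x => Aper (x / ε) + Bper (x / ε) :=
    hm₀.add (hBmeas.comp (measurable_id.div_const ε))
  have hθ : ∀ l ∈ Finset.range L, ((S l).card : ℝ) ≤ θ * N := fun l hl =>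
    (div_le_iff₀ (by positivity)).1 (Finset.le_sup' (fun l => ((S l).card : ℝ) / N) hl)
  have hA := bounds_of_isDefect (fun x => hAbd (x / ε)) (fun x => hABbd (x / ε)) hAdef hAout
  have hAi := (measurable_of_isDefect hm₀ hm₁ hAdef hAout).intervalIntegrable_of_bounds hA
  have hv := mul_sum_mul_sq_le_sum_integral hHpos.le (fun x => (hA x).1) hAi (Finset.range L) vs
  have hw := mul_sum_mul_sq_le_sum_integral hHpos.le (fun x => (hA x).1) hAi (Finset.range L) ws
  have hθ0 : 0 ≤ θ := (by positivity : (0 : ℝ) ≤ (S 0).card / N).trans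
    (Finset.le_sup' (fun l => ((S l).card : ℝ) / N) (Finset.mem_range.2 hL))
  have hβ : 0 < β := hα.trans_le hαβ
  rw [← Finset.sum_sub_distrib]
  simp_rw [← sub_mul]
  refine ((abs_sum_mul_le_mul_sqrt_mul_sqrt _ _ _ _ hHpos.le (by positivity) fun l hl =>
    abs_harmonic_sub_offline_le hα hαβ hε hq0 hq01 hq1 hN hS hp₀ hp₁ hm₀ hm₁
      (fun x => hAbd (x / ε)) (fun x => hABbd (x / ε)) hAdef hAout (Finset.mem_range.1 hl)
      (hθ l hl)).trans
    (mul_sqrt_mul_sqrt_le hα (by positivity) hv hw)).trans ?_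
  have hθ2 : θ ^ 2 ≤ ε / H * θ + 2 * θ ^ 2 := by
    nlinarith [mul_nonneg (div_nonneg hε.le hHpos.le) hθ0]
  rw [show β * (β - α) ^ 2 * (q₁ - q₀) ^ 2 / α ^ 2 * θ ^ 2 / α
      = β / α * ((β - α) / α) ^ 2 * (q₁ - q₀) ^ 2 * θ ^ 2 by field_simp]
  gcongr

/-- Theorem 4.1 of the paper (one-dimensional consistency error bound): the
difference between the PG-LOD bilinear form `𝔟` (with element-wise harmonic
means of the sample coefficient) and the offline-online bilinear form `𝔟̃`
(with combined offline harmonic means) is controlled by the defect fraction. -/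
theorem stmt_8 (α β ε q₀ q₁ : ℝ) (Aper Bper : ℝ → ℝ)
    (hα : 0 < α) (hαβ : α ≤ β) (hε : 0 < ε)
    (hAmeas : Measurable Aper) (hBmeas : Measurable Bper)
    (hAper : Function.Periodic Aper 1) (hBper : Function.Periodic Bper 1)
    (hAbd : ∀ y, α ≤ Aper y ∧ Aper y ≤ β)
    (hABbd : ∀ y, α ≤ Aper y + Bper y ∧ Aper y + Bper y ≤ β)
    (hq0 : 0 ≤ q₀) (hq01 : q₀ ≤ q₁) (hq1 : q₁ ≤ 1)
    (L N : ℕ) (hL : 1 ≤ L) (hN : 1 ≤ N) (hLN : (L : ℝ) * (N : ℝ) * ε = 1)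
    (S : ℕ → Finset ℕ) (hS : ∀ l, S l ⊆ Finset.range N)
    (A : ℝ → ℝ)
    (hAdef : ∀ x, (∃ l ∈ Finset.range L, ∃ j ∈ S l,
        x ∈ Set.Icc (ε * (((l * N + j : ℕ) : ℝ) + q₀)) (ε * (((l * N + j : ℕ) : ℝ) + q₁)))
        → A x = Aper (x / ε) + Bper (x / ε))
    (hAout : ∀ x, ¬ (∃ l ∈ Finset.range L, ∃ j ∈ S l,
        x ∈ Set.Icc (ε * (((l * N + j : ℕ) : ℝ) + q₀)) (ε * (((l * N + j : ℕ) : ℝ) + q₁)))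
        → A x = Aper (x / ε))
    (v w : ℝ → ℝ) (vs ws : ℕ → ℝ)
    (hvcont : ContinuousOn v (Set.Icc 0 1)) (hwcont : ContinuousOn w (Set.Icc 0 1))
    (hvaff : ∀ l ∈ Finset.range L,
        ∀ x ∈ Set.Icc ((l : ℝ) * ((N : ℝ) * ε)) (((l : ℝ) + 1) * ((N : ℝ) * ε)),
          v x = v ((l : ℝ) * ((N : ℝ) * ε)) + vs l * (x - (l : ℝ) * ((N : ℝ) * ε)))
    (hwaff : ∀ l ∈ Finset.range L,
        ∀ x ∈ Set.Icc ((l : ℝ) * ((N : ℝ) * ε)) (((l : ℝ) + 1) * ((N : ℝ) * ε)),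
          w x = w ((l : ℝ) * ((N : ℝ) * ε)) + ws l * (x - (l : ℝ) * ((N : ℝ) * ε))) :
    let H : ℝ := (N : ℝ) * ε
    let θ : ℝ := (Finset.range L).sup'
        (Finset.nonempty_range_iff.mpr (Nat.one_le_iff_ne_zero.mp hL))
        (fun l => ((S l).card : ℝ) / (N : ℝ))
    let Abar : ℝ := ∫ x in (0 : ℝ)..ε, 1 / Aper (x / ε)
    let Adef : ℝ := ∫ x in (ε * q₀)..(ε * q₁),
        (1 / (Aper (x / ε) + Bper (x / ε)) - 1 / Aper (x / ε))
    |(∑ l ∈ Finset.range L,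
          (H / (∫ x in ((l : ℝ) * H)..(((l : ℝ) + 1) * H), 1 / A x)) * vs l * ws l * H)
      - (∑ l ∈ Finset.range L,
          ((1 - ((S l).card : ℝ)) * H / ((N : ℝ) * Abar)
            + ((S l).card : ℝ) * H / ((N : ℝ) * Abar + Adef)) * vs l * ws l * H)|
      ≤ (β / α) * ((β - α) / α) ^ 2 * (q₁ - q₀) ^ 2 * ((ε / H) * θ + 2 * θ ^ 2)
        * Real.sqrt (∑ l ∈ Finset.range L,
            ∫ x in ((l : ℝ) * H)..(((l : ℝ) + 1) * H), A x * (vs l) ^ 2)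
        * Real.sqrt (∑ l ∈ Finset.range L,
            ∫ x in ((l : ℝ) * H)..(((l : ℝ) + 1) * H), A x * (ws l) ^ 2) :=
  stmt_8_general α β ε q₀ q₁ Aper Bper hα hαβ hε hAmeas hBmeas hAper hBper hAbd hABbd hq0 hq01 hq1 L
    N hL hN S hS A hAdef hAout vs ws
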